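/- arXiv:2201.03775 — 3 statements merged into one kernel-verified Lean document; each statement's English description precedes it below -/
import Mathlib

section
/- In a Leibniz algebra, the sum of two nilpotent two-sided ideals is again a nilpotent ideal. -/
/-- The bracket of two submodules: the span of all products `B a b`, `a ∈ I`, `b ∈ J`. -/
def bracketSpan {K L : Type*} [Field K] [AddCommGroup L] [Module K L]
    (B : L →ₗ[K] L →ₗ[K] L) (I J : Submodule K L) : Submodule K L :=
  Submodule.span K {z | ∃ a ∈ I, ∃ b ∈ J, z = B a b}

/-- Lower central series: `lcs B 0 = L¹ = L`, `lcs B k = L^(k+1)`, `L^(k+1) = [L^k, L]`. -/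
def lcs {K L : Type*} [Field K] [AddCommGroup L] [Module K L]
    (B : L →ₗ[K] L →ₗ[K] L) : ℕ → Submodule K L
  | 0 => ⊤
  | k + 1 => bracketSpan B (lcs B k) ⊤

/-- Derived series: `derSeries B 0 = L^[1] = L`, `L^[s+1] = [L^[s], L^[s]]`. -/
def derSeries {K L : Type*} [Field K] [AddCommGroup L] [Module K L]
    (B : L →ₗ[K] L →ₗ[K] L) : ℕ → Submodule K L
  | 0 => ⊤
  | k + 1 => bracketSpan B (derSeries B k) (derSeries B k)

/-- A two-sided ideal of the algebra `(L, B)`. -/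
def IsTwoSidedIdeal {K L : Type*} [Field K] [AddCommGroup L] [Module K L]
    (B : L →ₗ[K] L →ₗ[K] L) (I : Submodule K L) : Prop :=
  ∀ x ∈ I, ∀ y : L, B x y ∈ I ∧ B y x ∈ I

/-- Lower central series of an ideal `I`: `I^(k+1) = [I^k, I] + [I, I^k]`. -/
def idealLCS {K L : Type*} [Field K] [AddCommGroup L] [Module K L]
    (B : L →ₗ[K] L →ₗ[K] L) (I : Submodule K L) : ℕ → Submodule K L
  | 0 => I
  | k + 1 => bracketSpan B (idealLCS B I k) I ⊔ bracketSpan B I (idealLCS B I k)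

/-- `I` is a nilpotent ideal. -/
def IsNilpotentIdeal {K L : Type*} [Field K] [AddCommGroup L] [Module K L]
    (B : L →ₗ[K] L →ₗ[K] L) (I : Submodule K L) : Prop :=
  IsTwoSidedIdeal B I ∧ ∃ k : ℕ, idealLCS B I k = ⊥

/-- The standard basis vector `e i` of `Fin n → ℂ`. -/
def e {n : ℕ} (i : Fin n) : Fin n → ℂ := Pi.single i 1

/-! Bracketing with `I + J` raises the total degree of the filtration `∑_{p+q=n} I^p ∩ J^q`
(with `I^0 = L`), so `(I + J)^n` lies in its `n`-th term. This needs every `I^p` to be a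
two-sided ideal of `L`, which is where the Leibniz identity enters. If `I^a = J^b = 0`, the
`(a+b-1)`-th term of the filtration vanishes. -/

section

open Submodule

variable {K L : Type*} [Field K] [AddCommGroup L] [Module K L] {B : L →ₗ[K] L →ₗ[K] L}

theorem bracketSpan_eq_map₂ (I J : Submodule K L) : bracketSpan B I J = map₂ B I J := by
  rw [bracketSpan, map₂_eq_span_image2]
  congr 1
  ext z
  simp [Set.image2, eq_comm]

theorem idealLCS_succ (I : Submodule K L) (k : ℕ) :
    idealLCS B I (k + 1) = map₂ B (idealLCS B I k) I ⊔ map₂ B I (idealLCS B I k) := by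
  rw [idealLCS, bracketSpan_eq_map₂, bracketSpan_eq_map₂]

theorem idealLCS_eq_bot_of_le {I : Submodule K L} {k m : ℕ} (hk : idealLCS B I k = ⊥)
    (hkm : k ≤ m) : idealLCS B I m = ⊥ := by
  induction m, hkm using Nat.le_induction with
  | base => exact hk
  | succ m _ ih => rw [idealLCS_succ, ih, map₂_bot_left, map₂_bot_right, sup_bot_eq]

theorem isTwoSidedIdeal_iff_le_comap {N : Submodule K L} :
    IsTwoSidedIdeal B N ↔ ∀ y, N ≤ N.comap (B.flip y) ⊓ N.comap (B y) := by
  simp only [IsTwoSidedIdeal, SetLike.le_def, mem_inf, mem_comap, LinearMap.flip_apply]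
  exact ⟨fun h y x hx => h x hx y, fun h x hx y => h y hx⟩

namespace IsTwoSidedIdeal

theorem sup {I J : Submodule K L} (hI : IsTwoSidedIdeal B I) (hJ : IsTwoSidedIdeal B J) :
    IsTwoSidedIdeal B (I ⊔ J) := by
  rw [isTwoSidedIdeal_iff_le_comap] at *
  intro y
  exact sup_le ((hI y).trans (inf_le_inf (comap_mono le_sup_left) (comap_mono le_sup_left)))
    ((hJ y).trans (inf_le_inf (comap_mono le_sup_right) (comap_mono le_sup_right)))

theorem map₂_left_le {N : Submodule K L} (hN : IsTwoSidedIdeal B N) (X : Submodule K L) :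
    map₂ B N X ≤ N :=
  map₂_le.mpr fun a ha b _ => (hN a ha b).1

theorem map₂_right_le {N : Submodule K L} (hN : IsTwoSidedIdeal B N) (X : Submodule K L) :
    map₂ B X N ≤ N :=
  map₂_le.mpr fun a _ b hb => (hN b hb a).2

section Leibniz

variable (hLeib : ∀ x y z : L, B x (B y z) = B (B x y) z - B (B x z) y)
include hLeib

theorem map₂_le_comap_map₂_sup_map₂ {P Q : Submodule K L} (hP : IsTwoSidedIdeal B P)
    (hQ : IsTwoSidedIdeal B Q) (y : L) :
    map₂ B P Q ≤ (map₂ B P Q ⊔ map₂ B Q P).comap (B.flip y) ⊓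
      (map₂ B P Q ⊔ map₂ B Q P).comap (B y) := by
  refine map₂_le.mpr fun a ha c hc => mem_inf.mpr ⟨mem_comap.mpr ?_, mem_comap.mpr ?_⟩
  · have hrot : B (B a c) y = B a (B c y) + B (B a y) c := by rw [hLeib]; abel
    rw [LinearMap.flip_apply, hrot]
    exact add_mem (mem_sup_left (apply_mem_map₂ B ha (hQ c hc y).1))
      (mem_sup_left (apply_mem_map₂ B (hP a ha y).1 hc))
  · rw [hLeib]
    exact sub_mem (mem_sup_left (apply_mem_map₂ B (hP a ha y).2 hc))
      (mem_sup_right (apply_mem_map₂ B (hQ c hc y).2 ha))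

theorem map₂_sup_map₂ {P Q : Submodule K L} (hP : IsTwoSidedIdeal B P)
    (hQ : IsTwoSidedIdeal B Q) : IsTwoSidedIdeal B (map₂ B P Q ⊔ map₂ B Q P) := by
  refine isTwoSidedIdeal_iff_le_comap.mpr fun y => sup_le
    (map₂_le_comap_map₂_sup_map₂ hLeib hP hQ y) ?_
  rw [sup_comm]
  exact map₂_le_comap_map₂_sup_map₂ hLeib hQ hP y

theorem idealLCS {I : Submodule K L} (hI : IsTwoSidedIdeal B I) (k : ℕ) :
    IsTwoSidedIdeal B (idealLCS B I k) := by
  induction k with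
  | zero => exact hI
  | succ k ih => rw [idealLCS_succ]; exact ih.map₂_sup_map₂ hLeib hI

end Leibniz

end IsTwoSidedIdeal

/-- `idealPow B I p` is `I^p` with `I^0 = L`, whereas `idealLCS B I k` is `I^(k+1)`. -/
def idealPow (B : L →ₗ[K] L →ₗ[K] L) (I : Submodule K L) : ℕ → Submodule K L
  | 0 => ⊤
  | p + 1 => idealLCS B I p

theorem isTwoSidedIdeal_idealPow (hLeib : ∀ x y z : L, B x (B y z) = B (B x y) z - B (B x z) y)
    {I : Submodule K L} (hI : IsTwoSidedIdeal B I) : ∀ p, IsTwoSidedIdeal B (idealPow B I p)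
  | 0 => fun _ _ _ => ⟨trivial, trivial⟩
  | p + 1 => hI.idealLCS hLeib p

theorem map₂_idealPow_left_le {I : Submodule K L} (hI : IsTwoSidedIdeal B I) :
    ∀ p, map₂ B (idealPow B I p) I ≤ idealPow B I (p + 1)
  | 0 => hI.map₂_right_le ⊤
  | p + 1 => le_sup_left.trans (idealLCS_succ I p).ge

theorem map₂_idealPow_right_le {I : Submodule K L} (hI : IsTwoSidedIdeal B I) :
    ∀ p, map₂ B I (idealPow B I p) ≤ idealPow B I (p + 1)
  | 0 => hI.map₂_left_le ⊤
  | p + 1 => le_sup_right.trans (idealLCS_succ I p).ge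

theorem idealPow_eq_bot {I : Submodule K L} {a p : ℕ} (ha : idealLCS B I a = ⊥) (hp : a < p) :
    idealPow B I p = ⊥ := by
  obtain ⟨p, rfl⟩ := Nat.exists_eq_add_of_lt hp
  exact idealLCS_eq_bot_of_le ha (by omega)

def sumFiltration (B : L →ₗ[K] L →ₗ[K] L) (I J : Submodule K L) (n : ℕ) : Submodule K L :=
  ⨆ (p) (q) (_ : p + q = n), idealPow B I p ⊓ idealPow B J q

theorem idealPow_inf_le_sumFiltration (I J : Submodule K L) {p q n : ℕ} (h : p + q = n) :
    idealPow B I p ⊓ idealPow B J q ≤ sumFiltration B I J n :=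
  le_iSup₂_of_le p q (le_iSup_of_le h le_rfl)

section Leibniz

variable (hLeib : ∀ x y z : L, B x (B y z) = B (B x y) z - B (B x z) y)
  {I J : Submodule K L} (hI : IsTwoSidedIdeal B I) (hJ : IsTwoSidedIdeal B J)
include hLeib hI hJ

theorem map₂_sumFiltration_left_le (n : ℕ) :
    map₂ B (sumFiltration B I J n) (I ⊔ J) ≤ sumFiltration B I J (n + 1) := by
  rw [map₂_sup_right, sumFiltration]
  simp only [map₂_iSup_left]
  refine sup_le (iSup₂_le fun p q => iSup_le fun hpq => ?_)
    (iSup₂_le fun p q => iSup_le fun hpq => ?_)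
  · refine le_trans (le_inf ?_ ?_)
      (idealPow_inf_le_sumFiltration I J (by omega : p + 1 + q = n + 1))
    · exact (map₂_le_map₂_left inf_le_left).trans (map₂_idealPow_left_le hI p)
    · exact (map₂_le_map₂_left inf_le_right).trans
        ((isTwoSidedIdeal_idealPow hLeib hJ q).map₂_left_le I)
  · refine le_trans (le_inf ?_ ?_)
      (idealPow_inf_le_sumFiltration I J (by omega : p + (q + 1) = n + 1))
    · exact (map₂_le_map₂_left inf_le_left).trans
        ((isTwoSidedIdeal_idealPow hLeib hI p).map₂_left_le J)
    · exact (map₂_le_map₂_left inf_le_right).trans (map₂_idealPow_left_le hJ q)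

theorem map₂_sumFiltration_right_le (n : ℕ) :
    map₂ B (I ⊔ J) (sumFiltration B I J n) ≤ sumFiltration B I J (n + 1) := by
  rw [map₂_sup_left, sumFiltration]
  simp only [map₂_iSup_right]
  refine sup_le (iSup₂_le fun p q => iSup_le fun hpq => ?_)
    (iSup₂_le fun p q => iSup_le fun hpq => ?_)
  · refine le_trans (le_inf ?_ ?_)
      (idealPow_inf_le_sumFiltration I J (by omega : p + 1 + q = n + 1))
    · exact (map₂_le_map₂_right inf_le_left).trans (map₂_idealPow_right_le hI p)
    · exact (map₂_le_map₂_right inf_le_right).trans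
        ((isTwoSidedIdeal_idealPow hLeib hJ q).map₂_right_le I)
  · refine le_trans (le_inf ?_ ?_)
      (idealPow_inf_le_sumFiltration I J (by omega : p + (q + 1) = n + 1))
    · exact (map₂_le_map₂_right inf_le_left).trans
        ((isTwoSidedIdeal_idealPow hLeib hI p).map₂_right_le J)
    · exact (map₂_le_map₂_right inf_le_right).trans (map₂_idealPow_right_le hJ q)

theorem idealLCS_sup_le_sumFiltration (k : ℕ) :
    idealLCS B (I ⊔ J) k ≤ sumFiltration B I J (k + 1) := by
  induction k with
  | zero =>
    exact sup_le
      ((le_inf le_rfl le_top : I ≤ idealPow B I 1 ⊓ idealPow B J 0).trans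
        (idealPow_inf_le_sumFiltration I J rfl))
      ((le_inf le_top le_rfl : J ≤ idealPow B I 0 ⊓ idealPow B J 1).trans
        (idealPow_inf_le_sumFiltration I J rfl))
  | succ k ih =>
    rw [idealLCS_succ]
    exact sup_le ((map₂_le_map₂_left ih).trans (map₂_sumFiltration_left_le hLeib hI hJ _))
      ((map₂_le_map₂_right ih).trans (map₂_sumFiltration_right_le hLeib hI hJ _))

end Leibniz

theorem sumFiltration_eq_bot {I J : Submodule K L} {a b : ℕ} (ha : idealLCS B I a = ⊥)
    (hb : idealLCS B J b = ⊥) : sumFiltration B I J (a + b + 2) = ⊥ := by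
  refine eq_bot_iff.mpr (iSup₂_le fun p q => iSup_le fun hpq => ?_)
  rcases lt_or_ge a p with hp | hp
  · exact inf_le_left.trans (idealPow_eq_bot ha hp).le
  · exact inf_le_right.trans (idealPow_eq_bot hb (by omega)).le

end

/-- In a Leibniz algebra, the sum of two nilpotent two-sided ideals is again a
nilpotent two-sided ideal. -/
theorem sum_of_nilpotent_ideals_is_nilpotent_ideal
    {K L : Type*} [Field K] [AddCommGroup L] [Module K L]
    (B : L →ₗ[K] L →ₗ[K] L)
    (hLeib : ∀ x y z : L, B x (B y z) = B (B x y) z - B (B x z) y)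
    (I J : Submodule K L)
    (hI : IsNilpotentIdeal B I) (hJ : IsNilpotentIdeal B J) :
    IsNilpotentIdeal B (I ⊔ J) := by
  obtain ⟨hI, a, ha⟩ := hI
  obtain ⟨hJ, b, hb⟩ := hJ
  refine ⟨hI.sup hJ, a + b + 1, eq_bot_iff.mpr ?_⟩
  calc idealLCS B (I ⊔ J) (a + b + 1)
      ≤ sumFiltration B I J (a + b + 2) := idealLCS_sup_le_sumFiltration hLeib hI hJ _
    _ = ⊥ := sumFiltration_eq_bot ha hb
end

section
/- For n ≥ 6, the n-dimensional algebra μ₂ with basis e₁,…,e_n and nonzero products [e_i,e₁] = e_{i+1} for 1 ≤ i ≤ n−3, [e₁,e_{n−1}] = e₂ + e_n, and [e_i,e_{n−1}] = e_{i+1} for 2 ≤ i ≤ n−3 is a nilpotent Leibniz algebra that is not a Lie algebra. -/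
/-!
In coordinates (indices `0, …, n-1`, so `e 0` is the paper's `e₁`), the bracket is
`[x, y] = (y₀ + y_{n-2}) • S x + x₀ y_{n-2} • e_{n-1}`, where `S` shifts `e_m` to `e_{m+1}` for
`m ≤ n-4` and kills the rest. Every bracket has vanishing coordinates `0` and `n-2`, which are the
only ones `[x, ·]` reads, so `[x, [y, z]] = 0`; and `[[x, y], z]` is symmetric in `y, z`. Hence
the Leibniz identity. Giving `e_m` weight `m` for `m ≤ n-3`, `e_{n-1}` weight `1` and `e_{n-2}`
weight `0`, every coordinate of `[x, y]` is read off a coordinate of `x` of smaller weight, so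
`L^{k+1}` lives in weight `≥ k` and `L^{n-1} = 0`. Finally `[e₀, e_{n-2}] = e₁ + e_{n-1}`
while `[e_{n-2}, e₀] = 0`.
-/

theorem lcs_le_of_bracket_mem {K L : Type*} [Field K] [AddCommGroup L] [Module K L]
    {B : L →ₗ[K] L →ₗ[K] L} {F : ℕ → Submodule K L} (h0 : F 0 = ⊤)
    (hF : ∀ a x y, x ∈ F a → B x y ∈ F (a + 1)) (k : ℕ) : lcs B k ≤ F k := by
  induction k with
  | zero => simp [lcs, h0]
  | succ k ih =>
    refine Submodule.span_le.2 ?_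
    rintro _ ⟨x, hx, y, -, rfl⟩
    exact hF k x y (ih hx)

/-- The structure constants of `μ₂`, extended bilinearly. -/
def mu2Bracket (K : Type*) [CommRing K] (n : ℕ) :
    (Fin n → K) →ₗ[K] (Fin n → K) →ₗ[K] (Fin n → K) :=
  LinearMap.mk₂ K
    (fun x y m =>
      if 1 ≤ m.val ∧ m.val ≤ n - 3 then
        x ⟨m - 1, by omega⟩ * (y ⟨0, m.pos⟩ + y ⟨n - 2, Nat.sub_lt m.pos two_pos⟩)
      else if m.val = n - 1 then x ⟨0, m.pos⟩ * y ⟨n - 2, Nat.sub_lt m.pos two_pos⟩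
      else 0)
    (fun _ _ _ => by funext m; simp only [Pi.add_apply]; split_ifs <;> ring)
    (fun _ _ _ => by funext m; simp only [Pi.smul_apply, smul_eq_mul]; split_ifs <;> ring)
    (fun _ _ _ => by funext m; simp only [Pi.add_apply]; split_ifs <;> ring)
    (fun _ _ _ => by funext m; simp only [Pi.smul_apply, smul_eq_mul]; split_ifs <;> ring)

section mu2Bracket

variable {K : Type*} [CommRing K] {n : ℕ}

theorem mu2Bracket_apply (x y : Fin n → K) (m : Fin n) :
    mu2Bracket K n x y m =
      if 1 ≤ m.val ∧ m.val ≤ n - 3 then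
        x ⟨m - 1, by omega⟩ * (y ⟨0, m.pos⟩ + y ⟨n - 2, Nat.sub_lt m.pos two_pos⟩)
      else if m.val = n - 1 then x ⟨0, m.pos⟩ * y ⟨n - 2, Nat.sub_lt m.pos two_pos⟩
      else 0 :=
  rfl

theorem mu2Bracket_mu2Bracket_right (hn : 2 ≤ n) (x y z : Fin n → K) :
    mu2Bracket K n x (mu2Bracket K n y z) = 0 := by
  funext m
  have h0 : mu2Bracket K n y z ⟨0, m.pos⟩ = 0 := by
    rw [mu2Bracket_apply, if_neg (by simp), if_neg (by simp; omega)]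
  have h1 : mu2Bracket K n y z ⟨n - 2, Nat.sub_lt m.pos two_pos⟩ = 0 := by
    rw [mu2Bracket_apply, if_neg (by simp; omega), if_neg (by simp; omega)]
  rw [mu2Bracket_apply, h0, h1]
  simp

theorem mu2Bracket_mu2Bracket_comm (x y z : Fin n → K) :
    mu2Bracket K n (mu2Bracket K n x y) z = mu2Bracket K n (mu2Bracket K n x z) y := by
  funext m
  simp only [mu2Bracket_apply]
  split_ifs <;> first | omega | ring

theorem mu2Bracket_leibniz (hn : 2 ≤ n) (x y z : Fin n → K) :
    mu2Bracket K n x (mu2Bracket K n y z) =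
      mu2Bracket K n (mu2Bracket K n x y) z - mu2Bracket K n (mu2Bracket K n x z) y := by
  rw [mu2Bracket_mu2Bracket_right hn, mu2Bracket_mu2Bracket_comm x y z, sub_self]

theorem mu2Bracket_ne_neg_swap [Nontrivial K] (hn : 4 ≤ n) :
    mu2Bracket K n (Pi.single ⟨0, by omega⟩ 1) (Pi.single ⟨n - 2, by omega⟩ 1) ≠
      -mu2Bracket K n (Pi.single ⟨n - 2, by omega⟩ 1) (Pi.single ⟨0, by omega⟩ 1) := by
  intro h
  have h1 := congrFun h ⟨1, by omega⟩
  simp [mu2Bracket_apply, Fin.ext_iff, show 1 ≤ n - 3 by omega,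
    show n - 2 ≠ 0 by omega] at h1

def mu2Weight (n m : ℕ) : ℕ :=
  if m ≤ n - 3 then m else if m = n - 1 then 1 else 0

def mu2Filtration (K : Type*) [CommRing K] (n a : ℕ) : Submodule K (Fin n → K) :=
  Submodule.pi {m | mu2Weight n m < a} fun _ => ⊥

theorem mem_mu2Filtration {a : ℕ} {x : Fin n → K} :
    x ∈ mu2Filtration K n a ↔ ∀ m : Fin n, mu2Weight n m < a → x m = 0 := by
  simp [mu2Filtration, Submodule.mem_pi]

theorem mu2Filtration_zero : mu2Filtration K n 0 = ⊤ := by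
  ext x
  simp [mem_mu2Filtration]

theorem mu2Filtration_eq_bot (hn : 4 ≤ n) : mu2Filtration K n (n - 2) = ⊥ := by
  refine eq_bot_iff.2 fun x hx => (Submodule.mem_bot K).2 (funext fun m => ?_)
  exact mem_mu2Filtration.1 hx m (by unfold mu2Weight; split_ifs <;> omega)

theorem mu2Bracket_mem_mu2Filtration (hn : 2 ≤ n) {a : ℕ} {x : Fin n → K}
    (hx : x ∈ mu2Filtration K n a) (y : Fin n → K) :
    mu2Bracket K n x y ∈ mu2Filtration K n (a + 1) := by
  rw [mem_mu2Filtration] at hx ⊢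
  intro m hm
  rw [mu2Bracket_apply]
  split_ifs with hmid hlast
  · rw [hx _ (by simp only [mu2Weight] at hm ⊢; split_ifs at hm ⊢ <;> omega), zero_mul]
  · rw [hx _ (by simp only [mu2Weight] at hm ⊢; split_ifs at hm ⊢ <;> omega), zero_mul]
  · rfl

end mu2Bracket

theorem lcs_mu2Bracket_eq_bot {K : Type*} [Field K] {n : ℕ} (hn : 4 ≤ n) :
    lcs (mu2Bracket K n) (n - 2) = ⊥ := by
  rw [eq_bot_iff, ← mu2Filtration_eq_bot hn]
  exact lcs_le_of_bracket_mem mu2Filtration_zero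
    (fun _ _ y hx => mu2Bracket_mem_mu2Filtration (by omega) hx y) _

theorem eq_mu2Bracket_of_apply_e {n : ℕ} (hn : 4 ≤ n)
    {B : (Fin n → ℂ) →ₗ[ℂ] (Fin n → ℂ) →ₗ[ℂ] (Fin n → ℂ)}
    (hmul : ∀ i j : Fin n, B (e i) (e j) =
      if h : j.val = 0 ∧ i.val ≤ n - 4 then e ⟨i.val + 1, by omega⟩
      else if h2 : i.val = 0 ∧ j.val = n - 2 then
        e ⟨1, by omega⟩ + e ⟨n - 1, by omega⟩
      else if h3 : 1 ≤ i.val ∧ i.val ≤ n - 4 ∧ j.val = n - 2 then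
        e ⟨i.val + 1, by omega⟩
      else 0) :
    B = mu2Bracket ℂ n := by
  refine LinearMap.ext_basis (Pi.basisFun ℂ (Fin n)) (Pi.basisFun ℂ (Fin n)) fun i j => ?_
  rw [Pi.basisFun_apply, Pi.basisFun_apply]
  change B (e i) (e j) = mu2Bracket ℂ n (e i) (e j)
  rw [hmul]
  funext m
  rw [mu2Bracket_apply]
  split_ifs <;>
    simp only [e, Pi.single_apply, Pi.add_apply, Pi.zero_apply, Fin.ext_iff] <;>
    split_ifs <;> first | omega | norm_num

/-- For `n ≥ 6`, the algebra `μ₂` with basis `e₁, …, eₙ` and nonzero products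
`[eᵢ,e₁] = eᵢ₊₁` (`1 ≤ i ≤ n-3`), `[e₁,e_{n-1}] = e₂ + eₙ`, and
`[eᵢ,e_{n-1}] = eᵢ₊₁` (`2 ≤ i ≤ n-3`) (all `0`-based below) is a nilpotent
Leibniz algebra which is not a Lie algebra. -/
theorem mu2_is_nilpotent_nonLie_leibniz (n : ℕ) (hn : 6 ≤ n)
    (B : (Fin n → ℂ) →ₗ[ℂ] (Fin n → ℂ) →ₗ[ℂ] (Fin n → ℂ))
    (hmul : ∀ i j : Fin n, B (e i) (e j) =
      if h : j.val = 0 ∧ i.val ≤ n - 4 then e ⟨i.val + 1, by omega⟩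
      else if h2 : i.val = 0 ∧ j.val = n - 2 then
        e ⟨1, by omega⟩ + e ⟨n - 1, by omega⟩
      else if h3 : 1 ≤ i.val ∧ i.val ≤ n - 4 ∧ j.val = n - 2 then
        e ⟨i.val + 1, by omega⟩
      else 0) :
    (∀ x y z : Fin n → ℂ, B x (B y z) = B (B x y) z - B (B x z) y) ∧
      (∃ k : ℕ, lcs B k = ⊥) ∧
      (∃ x y : Fin n → ℂ, B x y ≠ -B y x) := by
  obtain rfl := eq_mu2Bracket_of_apply_e (by omega) hmul
  exact ⟨mu2Bracket_leibniz (by omega), ⟨n - 2, lcs_mu2Bracket_eq_bot (by omega)⟩,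
    ⟨_, _, mu2Bracket_ne_neg_swap (by omega)⟩⟩
end

section
/- Let L be a solvable Leibniz algebra with nilradical N of codimension 1 and L = N ⊕ ℂx. Then the operator R_x restricted to N is a non-nilpotent derivation of N. -/
section helpers
variable {K L : Type*} [Field K] [AddCommGroup L] [Module K L] (B : L →ₗ[K] L →ₗ[K] L)

lemma mem_bracketSpan {I J : Submodule K L} {a b : L} (ha : a ∈ I) (hb : b ∈ J) :
    B a b ∈ bracketSpan B I J :=
  Submodule.subset_span ⟨a, ha, b, hb, rfl⟩

lemma bracketSpan_le {I J : Submodule K L} {P : Submodule K L}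
    (h : ∀ a ∈ I, ∀ b ∈ J, B a b ∈ P) : bracketSpan B I J ≤ P := by
  apply Submodule.span_le.mpr
  rintro z ⟨a, ha, b, hb, rfl⟩
  exact h a ha b hb

lemma bracketSpan_mono {I J I' J' : Submodule K L} (hI : I ≤ I') (hJ : J ≤ J') :
    bracketSpan B I J ≤ bracketSpan B I' J' :=
  bracketSpan_le B fun a ha b hb => mem_bracketSpan B (hI ha) (hJ hb)

lemma bracketSpan_sup_left {I₁ I₂ J : Submodule K L} :
    bracketSpan B (I₁ ⊔ I₂) J ≤ bracketSpan B I₁ J ⊔ bracketSpan B I₂ J := by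
  apply bracketSpan_le
  intro a ha b hb
  obtain ⟨a₁, h₁, a₂, h₂, rfl⟩ := Submodule.mem_sup.mp ha
  rw [map_add, LinearMap.add_apply]
  exact Submodule.add_mem_sup (mem_bracketSpan B h₁ hb) (mem_bracketSpan B h₂ hb)

lemma bracketSpan_sup_right {I J₁ J₂ : Submodule K L} :
    bracketSpan B I (J₁ ⊔ J₂) ≤ bracketSpan B I J₁ ⊔ bracketSpan B I J₂ := by
  apply bracketSpan_le
  intro a ha b hb
  obtain ⟨b₁, h₁, b₂, h₂, rfl⟩ := Submodule.mem_sup.mp hb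
  rw [map_add]
  exact Submodule.add_mem_sup (mem_bracketSpan B ha h₁) (mem_bracketSpan B ha h₂)

lemma idealLCS_le_self {I : Submodule K L} (hI : IsTwoSidedIdeal B I) :
    ∀ p, idealLCS B I p ≤ I
  | 0 => le_rfl
  | p + 1 => sup_le
      (bracketSpan_le B fun a _ b hb => (hI b hb a).2)
      (bracketSpan_le B fun a ha b _ => (hI a ha b).1)

lemma idealLCS_antitone {I : Submodule K L} (hI : IsTwoSidedIdeal B I) :
    ∀ p, idealLCS B I (p + 1) ≤ idealLCS B I p := by
  intro p
  induction p with
  | zero => exact idealLCS_le_self B hI 1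
  | succ p ih =>
      show bracketSpan B (idealLCS B I (p+1)) I ⊔ bracketSpan B I (idealLCS B I (p+1)) ≤ _
      exact sup_le (le_sup_of_le_left (bracketSpan_mono B ih le_rfl))
        (le_sup_of_le_right (bracketSpan_mono B le_rfl ih))

end helpers

theorem right_mult_on_nilradical_not_nilpotent'
    {L : Type*} [AddCommGroup L] [Module ℂ L]
    (B : L →ₗ[ℂ] L →ₗ[ℂ] L)
    (hLeib : ∀ x y z : L, B x (B y z) = B (B x y) z - B (B x z) y)
    (N : Submodule ℂ L)
    (hNnil : IsNilpotentIdeal B N)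
    (hNmax : ∀ I : Submodule ℂ L, IsNilpotentIdeal B I → I ≤ N)
    (x : L) (hx : x ∉ N)
    (hcodim : N ⊔ Submodule.span ℂ {x} = ⊤) :
    (∀ y ∈ N, B y x ∈ N) ∧
      ¬ ∃ k : ℕ, ∀ y ∈ N, ((fun z : L => B z x)^[k]) y = 0 := by
  have hNid := hNnil.1
  refine ⟨fun y hy => (hNid y hy x).1, ?_⟩
  rintro ⟨k, hk⟩
  set D : L →ₗ[ℂ] L := B.flip x with hDdef
  have hDapp : ∀ y, D y = B y x := fun y => rfl
  set Λ : Submodule ℂ L := Submodule.span ℂ {z | ∃ a, z = B a a} with hΛdef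
  have hsq : ∀ a : L, B a a ∈ Λ := fun a => Submodule.subset_span ⟨a, rfl⟩
  -- squares are killed on the left
  have hkill : ∀ q ∈ Λ, ∀ z : L, B z q = 0 := by
    intro q hq z
    have hle : Λ ≤ ⨅ z : L, LinearMap.ker (B z) := by
      apply Submodule.span_le.mpr
      rintro _ ⟨a, rfl⟩
      simp only [SetLike.mem_coe, Submodule.mem_iInf, LinearMap.mem_ker]
      intro w
      rw [hLeib w a a, sub_self]
    exact (Submodule.mem_iInf _).mp (hle hq) z
  -- cross terms lie in Λ
  have hcross : ∀ a b : L, B a b + B b a ∈ Λ := by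
    intro a b
    have hexp : B a b + B b a = B (a + b) (a + b) - B a a - B b b := by
      simp only [map_add, LinearMap.add_apply]
      abel
    rw [hexp]
    exact Submodule.sub_mem Λ (Submodule.sub_mem Λ (hsq _) (hsq _)) (hsq _)
  -- Λ absorbs on the right
  have habs : ∀ q ∈ Λ, ∀ y : L, B q y ∈ Λ := by
    intro q hq y
    have hle : Λ ≤ Submodule.comap (B.flip y) Λ := by
      apply Submodule.span_le.mpr
      rintro _ ⟨a, rfl⟩
      simp only [SetLike.mem_coe, Submodule.mem_comap, LinearMap.flip_apply]
      have heq : B (B a a) y = B a (B a y) + B (B a y) a := by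
        rw [hLeib a a y]; abel
      rw [heq]
      exact hcross a (B a y)
    exact hle hq
  -- Λ ≤ N
  have hΛN : Λ ≤ N := by
    apply hNmax
    refine ⟨fun q hq y => ⟨habs q hq y, by rw [hkill q hq y]; exact Submodule.zero_mem Λ⟩, 1, ?_⟩
    rw [eq_bot_iff]
    show bracketSpan B (idealLCS B Λ 0) Λ ⊔ bracketSpan B Λ (idealLCS B Λ 0) ≤ ⊥
    refine sup_le (bracketSpan_le B fun a _ b hb => ?_) (bracketSpan_le B fun a _ b hb => ?_) <;>
      simp [hkill b hb a]
  -- D is a derivation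
  have hder : ∀ a b : L, D (B a b) = B a (D b) + B (D a) b := by
    intro a b
    simp only [hDapp]
    rw [hLeib a b x]
    abel
  -- decomposition of elements of L
  have hdecomp : ∀ y : L, ∃ n ∈ N, ∃ c : ℂ, y = n + c • x := by
    intro y
    have hy : y ∈ N ⊔ Submodule.span ℂ {x} := hcodim ▸ Submodule.mem_top
    obtain ⟨n, hn, z, hz, rfl⟩ := Submodule.mem_sup.mp hy
    obtain ⟨c, rfl⟩ := Submodule.mem_span_singleton.mp hz
    exact ⟨n, hn, c, rfl⟩
  -- D^k kills N
  have hDk : ∀ y ∈ N, (D ^ k) y = 0 := by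
    intro y hy
    rw [Module.End.pow_apply]
    exact hk y hy
  set Np : ℕ → Submodule ℂ L := idealLCS B N with hNpdef
  have hNp_le : ∀ p, Np p ≤ N := idealLCS_le_self B hNid
  have hNp_anti : ∀ p, Np (p + 1) ≤ Np p := idealLCS_antitone B hNid
  have hbrR : ∀ p, bracketSpan B (Np p) N ≤ Np (p + 1) := fun p => le_sup_left
  have hbrL : ∀ p, bracketSpan B N (Np p) ≤ Np (p + 1) := fun p => le_sup_right
  -- D stability
  have hDN : ∀ a ∈ N, D a ∈ N := fun a ha => (hNid a ha x).1
  have hDNp : ∀ p, ∀ a ∈ Np p, D a ∈ Np p := by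
    intro p
    induction p with
    | zero => exact hDN
    | succ p ih =>
        intro a ha
        have hle : Np (p + 1) ≤ Submodule.comap D (Np (p + 1)) := by
          refine sup_le (bracketSpan_le B fun u hu v hv => ?_)
            (bracketSpan_le B fun u hu v hv => ?_) <;>
          · simp only [Submodule.mem_comap]
            rw [hder u v]
            refine Submodule.add_mem _ ?_ ?_
            · first
                | exact hbrR p (mem_bracketSpan B hu (hDN v hv))
                | exact hbrL p (mem_bracketSpan B hu (ih v hv))
            · first
                | exact hbrR p (mem_bracketSpan B (ih u hu) hv)
                | exact hbrL p (mem_bracketSpan B (hDN u hu) hv)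
        exact hle ha
  have hDΛ : ∀ a ∈ Λ, D a ∈ Λ := fun a ha => habs a ha x
  -- powers preserve D-stable submodules
  have pow_stable : ∀ (X : Submodule ℂ L), (∀ a ∈ X, D a ∈ X) →
      ∀ j, Submodule.map (D ^ j) X ≤ X := by
    intro X hX j
    induction j with
    | zero =>
        rw [pow_zero, Module.End.one_eq_id, Submodule.map_id]
    | succ j ih =>
        rintro _ ⟨a, ha, rfl⟩
        rw [pow_succ', Module.End.mul_apply]
        exact hX _ (ih ⟨a, ha, rfl⟩)
  have map_pow_succ : ∀ (X : Submodule ℂ L) (j : ℕ),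
      Submodule.map D (Submodule.map (D ^ j) X) ≤ Submodule.map (D ^ (j + 1)) X := by
    rintro X j _ ⟨_, ⟨a, ha, rfl⟩, rfl⟩
    exact ⟨a, ha, by rw [pow_succ', Module.End.mul_apply]⟩
  have hmapD_le : ∀ (X Y : Submodule ℂ L), (∀ a ∈ X, D a ∈ Y) → Submodule.map D X ≤ Y := by
    rintro X Y h _ ⟨a, ha, rfl⟩; exact h a ha
  -- decomposition of brackets with ⊤
  have hWright : ∀ W : Submodule ℂ L,
      bracketSpan B W ⊤ ≤ bracketSpan B W N ⊔ Submodule.map D W := by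
    intro W
    apply bracketSpan_le
    intro a ha b _
    obtain ⟨n, hn, c, rfl⟩ := hdecomp b
    have hkey : B a (n + c • x) = B a n + c • D a := by
      rw [map_add, map_smul, hDapp]
    rw [hkey]
    exact Submodule.add_mem_sup (mem_bracketSpan B ha hn)
      (Submodule.smul_mem _ c ⟨a, ha, rfl⟩)
  have hWleft : ∀ W : Submodule ℂ L,
      bracketSpan B ⊤ W ≤ bracketSpan B N W ⊔ Submodule.map D W ⊔ Λ := by
    intro W
    apply bracketSpan_le
    intro a ha b hb
    obtain ⟨n, hn, c, rfl⟩ := hdecomp a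
    have hkey : B (n + c • x) b = (B n b + (-c) • D b) + c • (B x b + B b x) := by
      simp only [map_add, LinearMap.add_apply, LinearMap.smul_apply, map_smul, hDapp,
        smul_add, neg_smul]
      abel
    rw [hkey]
    refine Submodule.add_mem_sup (Submodule.add_mem_sup (mem_bracketSpan B hn hb) ?_) ?_
    · exact Submodule.smul_mem _ _ ⟨b, hb, rfl⟩
    · exact Submodule.smul_mem _ _ (hcross x b)
  -- bracket of anything with Λ is zero
  have hNΛbot : ∀ (J : Submodule ℂ L), bracketSpan B J Λ ≤ ⊥ := by
    intro J
    apply bracketSpan_le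
    intro a _ b hb
    simp [hkill b hb a]
  have hΛabs : ∀ (J : Submodule ℂ L), bracketSpan B Λ J ≤ Λ :=
    fun J => bracketSpan_le B fun a ha b _ => habs a ha b
  set W : ℕ → Submodule ℂ L := idealLCS B ⊤ with hWdef
  have hWsucc : ∀ m, W (m + 1) = bracketSpan B (W m) ⊤ ⊔ bracketSpan B ⊤ (W m) :=
    fun m => rfl
  -- Claim 1: modulo Λ, W eventually falls into every Np p
  have claim1 : ∀ p, ∃ m, W m ≤ Np p ⊔ Λ := by
    intro p
    induction p with
    | zero =>
        refine ⟨1, ?_⟩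
        have hTT : bracketSpan B (⊤ : Submodule ℂ L) ⊤ ≤ N ⊔ Λ := by
          apply bracketSpan_le
          intro a _ b _
          obtain ⟨n, hn, c, rfl⟩ := hdecomp a
          obtain ⟨m, hm, d, rfl⟩ := hdecomp b
          have hkey : B (n + c • x) (m + d • x)
              = (B n m + d • B n x + c • B x m) + (c * d) • B x x := by
            simp only [map_add, LinearMap.add_apply, map_smul, LinearMap.smul_apply,
              smul_add, smul_smul]
            module
          rw [hkey]
          refine Submodule.add_mem_sup ?_ (Submodule.smul_mem _ _ (hsq x))
          refine Submodule.add_mem _ (Submodule.add_mem _ (hNid n hn m).1 ?_) ?_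
          · exact Submodule.smul_mem _ _ (hNid n hn x).1
          · exact Submodule.smul_mem _ _ (hNid m hm x).2
        exact sup_le hTT hTT
    | succ p ih =>
        obtain ⟨m, hm⟩ := ih
        have inner : ∀ j, W (m + j) ≤ Np (p + 1) ⊔ Λ ⊔ Submodule.map (D ^ j) (Np p) := by
          intro j
          induction j with
          | zero =>
              rw [pow_zero, Module.End.one_eq_id, Submodule.map_id]
              exact hm.trans (sup_le le_sup_right (le_sup_of_le_left le_sup_right))
          | succ j ihj =>
              have hAj_Np : Submodule.map (D ^ j) (Np p) ≤ Np p := pow_stable _ (hDNp p) j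
              have hDW' : Submodule.map D (W (m + j))
                  ≤ Np (p + 1) ⊔ Λ ⊔ Submodule.map (D ^ (j + 1)) (Np p) := by
                refine (Submodule.map_mono ihj).trans ?_
                rw [Submodule.map_sup, Submodule.map_sup]
                refine sup_le (sup_le ?_ ?_) ?_
                · exact (hmapD_le _ _ (hDNp (p + 1))).trans (le_sup_of_le_left le_sup_left)
                · exact (hmapD_le _ _ hDΛ).trans (le_sup_of_le_left le_sup_right)
                · exact (map_pow_succ _ j).trans le_sup_right
              have hbspW'N : bracketSpan B (W (m + j)) N ≤ Np (p + 1) ⊔ Λ := by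
                refine (bracketSpan_mono B ihj le_rfl).trans ?_
                refine (bracketSpan_sup_left B).trans
                  (sup_le ((bracketSpan_sup_left B).trans ?_) ?_)
                · exact sup_le (le_sup_of_le_left ((hbrR (p + 1)).trans (hNp_anti (p + 1))))
                    (le_sup_of_le_right (hΛabs N))
                · exact le_sup_of_le_left ((bracketSpan_mono B hAj_Np le_rfl).trans (hbrR p))
              have hbspNW' : bracketSpan B N (W (m + j)) ≤ Np (p + 1) := by
                refine (bracketSpan_mono B le_rfl ihj).trans ?_
                refine (bracketSpan_sup_right B).trans
                  (sup_le ((bracketSpan_sup_right B).trans ?_) ?_)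
                · exact sup_le ((hbrL (p + 1)).trans (hNp_anti (p + 1))) ((hNΛbot N).trans bot_le)
                · exact (bracketSpan_mono B le_rfl hAj_Np).trans (hbrL p)
              show bracketSpan B (W (m + j)) ⊤ ⊔ bracketSpan B ⊤ (W (m + j)) ≤ _
              refine sup_le ?_ ?_
              · exact (hWright _).trans (sup_le (hbspW'N.trans (le_sup_of_le_left le_rfl)) hDW')
              · refine (hWleft _).trans (sup_le (sup_le ?_ hDW') ?_)
                · exact hbspNW'.trans (le_sup_of_le_left le_sup_left)
                · exact le_sup_of_le_left le_sup_right
        have hbot : Submodule.map (D ^ k) (Np p) ≤ ⊥ := by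
          rintro _ ⟨a, ha, rfl⟩
          simp [hDk a (hNp_le p ha)]
        exact ⟨m + k, (inner k).trans (sup_le le_rfl (hbot.trans bot_le))⟩
  obtain ⟨s, hs⟩ := hNnil.2
  have hNs : Np s = ⊥ := hs
  obtain ⟨m₀, hm₀⟩ := claim1 s
  rw [hNs, bot_sup_eq] at hm₀
  -- Claim 2: once inside Λ, W eventually falls into every Np p (intersected with Λ)
  have claim2 : ∀ p, ∃ m, W m ≤ Λ ⊓ Np p := by
    intro p
    induction p with
    | zero => exact ⟨m₀, le_inf hm₀ (hm₀.trans hΛN)⟩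
    | succ p ih =>
        obtain ⟨m, hm⟩ := ih
        have inner : ∀ j, W (m + j)
            ≤ Λ ⊓ (Np (p + 1) ⊔ Submodule.map (D ^ j) (Λ ⊓ Np p)) := by
          intro j
          induction j with
          | zero =>
              rw [pow_zero, Module.End.one_eq_id, Submodule.map_id]
              exact le_inf (hm.trans inf_le_left) (hm.trans le_sup_right)
          | succ j ihj =>
              have hA_le : Submodule.map (D ^ j) (Λ ⊓ Np p) ≤ Λ ⊓ Np p := by
                refine pow_stable _ (fun a ha => ?_) j
                exact ⟨hDΛ a ha.1, hDNp p a ha.2⟩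
              have hW'Λ : W (m + j) ≤ Λ := ihj.trans inf_le_left
              have hW'2 : W (m + j) ≤ Np (p + 1) ⊔ Submodule.map (D ^ j) (Λ ⊓ Np p) :=
                ihj.trans inf_le_right
              show bracketSpan B (W (m + j)) ⊤ ⊔ bracketSpan B ⊤ (W (m + j)) ≤ _
              refine sup_le ?_ ?_
              · refine (hWright _).trans (sup_le ?_ ?_)
                · -- bracketSpan W' N
                  refine le_inf ?_ ?_
                  · exact (bracketSpan_mono B hW'Λ le_rfl).trans (hΛabs N)
                  · refine le_sup_of_le_left ?_
                    refine (bracketSpan_mono B hW'2 le_rfl).trans ?_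
                    refine (bracketSpan_sup_left B).trans
                      (sup_le ((hbrR (p + 1)).trans (hNp_anti (p + 1))) ?_)
                    exact (bracketSpan_mono B (hA_le.trans inf_le_right) le_rfl).trans (hbrR p)
                · -- map D W'
                  refine le_inf ?_ ?_
                  · exact (Submodule.map_mono hW'Λ).trans (hmapD_le _ _ hDΛ)
                  · refine (Submodule.map_mono hW'2).trans ?_
                    rw [Submodule.map_sup]
                    refine sup_le ?_ ?_
                    · exact (hmapD_le _ _ (hDNp (p + 1))).trans le_sup_left
                    · exact (map_pow_succ _ j).trans le_sup_right
              · exact ((bracketSpan_mono B le_rfl hW'Λ).trans (hNΛbot ⊤)).trans bot_le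
        have hbot : Submodule.map (D ^ k) (Λ ⊓ Np p) ≤ ⊥ := by
          rintro _ ⟨a, ha, rfl⟩
          simp [hDk a (hΛN ha.1)]
        exact ⟨m + k, (inner k).trans
          (inf_le_inf_left Λ (sup_le le_rfl (hbot.trans bot_le)))⟩
  obtain ⟨m₁, hm₁⟩ := claim2 s
  rw [hNs] at hm₁
  have hWbot : W m₁ = ⊥ := le_bot_iff.mp (hm₁.trans inf_le_right)
  have htop : IsNilpotentIdeal B ⊤ :=
    ⟨fun a _ y => ⟨Submodule.mem_top, Submodule.mem_top⟩, m₁, hWbot⟩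
  exact hx (hNmax ⊤ htop Submodule.mem_top)

/-- If `L` is a solvable Leibniz algebra whose nilradical `N` has codimension
one, `L = N ⊕ ℂx`, then the right multiplication operator `R_x` maps `N` to
`N` and its restriction to `N` is a non-nilpotent derivation of `N`. -/
theorem right_mult_on_nilradical_not_nilpotent
    {L : Type*} [AddCommGroup L] [Module ℂ L]
    (B : L →ₗ[ℂ] L →ₗ[ℂ] L)
    (hLeib : ∀ x y z : L, B x (B y z) = B (B x y) z - B (B x z) y)
    (hsolv : ∃ m : ℕ, derSeries B m = ⊥)
    (N : Submodule ℂ L)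
    (hNnil : IsNilpotentIdeal B N)
    (hNmax : ∀ I : Submodule ℂ L, IsNilpotentIdeal B I → I ≤ N)
    (x : L) (hx : x ∉ N)
    (hcodim : N ⊔ Submodule.span ℂ {x} = ⊤) :
    (∀ y ∈ N, B y x ∈ N) ∧
      ¬ ∃ k : ℕ, ∀ y ∈ N, ((fun z : L => B z x)^[k]) y = 0 :=
  right_mult_on_nilradical_not_nilpotent' B hLeib N hNnil hNmax x hx hcodim
end
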